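/- Let V be the ℂ-vector space with basis {e_k : k ∈ ℤ}, let π₊ and π₋ denote the projections of V onto the spans of {e_k : k ≥ 0} and {e_k : k < 0} respectively, and for an integer j let ρ_j(L_m) ∈ End(V) be given by ρ_j(L_m)(e_k) = −(k + j(m+1)) e_{k+m}. With the Japanese cocycle η(F,G) := Σ_{k<0} [ (coefficient of e_k in (π₋ ∘ F ∘ π₊ ∘ G)(e_k)) − (coefficient of e_k in (π₋ ∘ G ∘ π₊ ∘ F)(e_k)) ] (a finitely supported sum for these operators), the pullbacks of η along the representations ρ_j satisfy, for all integers j, m, n: η(ρ_j(L_m), ρ_j(L_n)) = (6j² − 6j + 1) · η(ρ_1(L_m), ρ_1(L_n)). -/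

import Mathlib

/-- The intermediate-series operator `ρ_j(L_m)` on the `ℂ`-vector space with basis
`{e_k : k ∈ ℤ}` (modeled as `ℤ →₀ ℂ`, `e_k = Finsupp.single k 1`):
`ρ_j(L_m)(e_k) = −(k + j(m+1))·e_{k+m}`. -/
noncomputable def rho (j m : ℤ) : (ℤ →₀ ℂ) →ₗ[ℂ] (ℤ →₀ ℂ) :=
  Finsupp.lsum ℂ fun k => (-((k : ℂ) + (j : ℂ) * ((m : ℂ) + 1))) • Finsupp.lsingle (k + m)

/-- The projection `π₊` of `ℤ →₀ ℂ` onto the span of `{e_k : k ≥ 0}`. -/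
noncomputable def piPlus : (ℤ →₀ ℂ) →ₗ[ℂ] (ℤ →₀ ℂ) :=
  Finsupp.lsum ℂ fun k => if 0 ≤ k then Finsupp.lsingle k else 0

/-- The projection `π₋` of `ℤ →₀ ℂ` onto the span of `{e_k : k < 0}`. -/
noncomputable def piMinus : (ℤ →₀ ℂ) →ₗ[ℂ] (ℤ →₀ ℂ) :=
  Finsupp.lsum ℂ fun k => if k < 0 then Finsupp.lsingle k else 0

/-- The `k`-th diagonal entry (for `k < 0`) of `F^{−+}G^{+−} − G^{−+}F^{+−}`:
the coefficient of `e_k` in `(π₋ ∘ F ∘ π₊ ∘ G)(e_k) − (π₋ ∘ G ∘ π₊ ∘ F)(e_k)`. -/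
noncomputable def etaSummand (F G : (ℤ →₀ ℂ) →ₗ[ℂ] (ℤ →₀ ℂ)) (k : ℤ) : ℂ :=
  if k < 0 then
    ((piMinus ∘ₗ F ∘ₗ piPlus ∘ₗ G) (Finsupp.single k 1)) k -
      ((piMinus ∘ₗ G ∘ₗ piPlus ∘ₗ F) (Finsupp.single k 1)) k
  else 0

/-- The Japanese cocycle `η(F,G) = tr(F^{−+}G^{+−} − G^{−+}F^{+−})`, as a sum over `k < 0`
of diagonal matrix entries. -/
noncomputable def eta (F G : (ℤ →₀ ℂ) →ₗ[ℂ] (ℤ →₀ ℂ)) : ℂ :=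
  ∑ᶠ k : ℤ, etaSummand F G k

/-!
Both operators shift degrees, `ρ_j(L_m)` by `m`, so `ρ_j(L_m)^{−+} ρ_j(L_n)^{+−}` has a nonzero
diagonal only when `m + n = 0`, and then only in the `|m|` degrees `−|m| ≤ k < 0` that one of the
two shifts moves across `0`. Each diagonal entry is a product of two linear polynomials in `k`, so
the trace is a sum of squares and linear terms over `|m|` consecutive integers, which evaluates to
`(6j² − 6j + 1)(m³ − m)/6`. The case `m < 0` reduces to `m > 0` by antisymmetry of `η`.
-/

open Finset

lemma rho_single (j m k : ℤ) (c : ℂ) :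
    rho j m (Finsupp.single k c) =
      Finsupp.single (k + m) (-((k : ℂ) + j * (m + 1)) * c) := by
  simp [rho, Finsupp.smul_single, mul_comm]

lemma piPlus_single (k : ℤ) (c : ℂ) :
    piPlus (Finsupp.single k c) = if 0 ≤ k then Finsupp.single k c else 0 := by
  rw [piPlus, Finsupp.lsum_single]
  split_ifs <;> simp

lemma piMinus_single (k : ℤ) (c : ℂ) :
    piMinus (Finsupp.single k c) = if k < 0 then Finsupp.single k c else 0 := by
  rw [piMinus, Finsupp.lsum_single]
  split_ifs <;> simp

lemma etaSummand_comm (F G : (ℤ →₀ ℂ) →ₗ[ℂ] (ℤ →₀ ℂ)) (k : ℤ) :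
    etaSummand G F k = -etaSummand F G k := by
  unfold etaSummand
  split_ifs <;> ring

lemma eta_comm (F G : (ℤ →₀ ℂ) →ₗ[ℂ] (ℤ →₀ ℂ)) : eta G F = -eta F G := by
  simp only [eta, etaSummand_comm F G, finsum_neg_distrib]

lemma piMinus_rho_piPlus_rho_single_apply_self (j m n k : ℤ) :
    (piMinus ∘ₗ rho j m ∘ₗ piPlus ∘ₗ rho j n) (Finsupp.single k 1) k =
      if k < 0 ∧ 0 ≤ k + n ∧ m + n = 0 then
        ((k : ℂ) + j * (n + 1)) * (k + n + j * (m + 1))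
      else 0 := by
  simp only [LinearMap.comp_apply, rho_single, piPlus_single]
  by_cases hkn : 0 ≤ k + n
  · rw [if_pos hkn, rho_single, piMinus_single]
    by_cases hmn : m + n = 0
    · have hk : k + n + m = k := by omega
      by_cases hk0 : k < 0
      · simp only [hk, hk0, hkn, hmn, and_self, if_true, Finsupp.single_eq_same]
        push_cast
        ring
      · simp [hk, hk0]
    · have hk : k + n + m ≠ k := by omega
      rw [if_neg (show ¬(k < 0 ∧ 0 ≤ k + n ∧ m + n = 0) by omega)]
      split_ifs <;> simp [hk]
  · simp [hkn]

lemma etaSummand_rho (j m n k : ℤ) :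
    etaSummand (rho j m) (rho j n) k =
      if k < 0 ∧ m + n = 0 then
        (if 0 ≤ k + n then ((k : ℂ) + j * (n + 1)) * (k + n + j * (m + 1)) else 0) -
          (if 0 ≤ k + m then ((k : ℂ) + j * (m + 1)) * (k + m + j * (n + 1)) else 0)
      else 0 := by
  rw [etaSummand, piMinus_rho_piPlus_rho_single_apply_self,
    piMinus_rho_piPlus_rho_single_apply_self]
  split_ifs <;> first | (exfalso; omega) | ring

lemma support_etaSummand_rho_subset (j m n : ℤ) :
    Function.support (etaSummand (rho j m) (rho j n)) ⊆ ↑(Ico (-|m|) 0) := by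
  intro k hk
  rw [Function.mem_support, etaSummand_rho] at hk
  rw [coe_Ico, Set.mem_Ico]
  by_contra hout
  apply hk
  cases abs_cases m <;> split_ifs <;> first | (exfalso; omega) | ring

lemma finite_support_etaSummand_rho (j m n : ℤ) :
    (Function.support (etaSummand (rho j m) (rho j n))).Finite :=
  (Ico (-|m|) 0).finite_toSet.subset (support_etaSummand_rho_subset j m n)

lemma eta_rho_of_add_ne_zero {j m n : ℤ} (hmn : m + n ≠ 0) : eta (rho j m) (rho j n) = 0 := by
  simp [eta, etaSummand_rho, hmn]

lemma six_mul_sum_Ico_add_mul_add {R : Type*} [CommRing R] (a b : R) (M : ℕ) :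
    6 * ∑ k ∈ Ico (-(M : ℤ)) 0, ((k : R) + a) * (k + b) =
      M * (M + 1) * (2 * M + 1) - 3 * (a + b) * (M * (M + 1)) + 6 * a * b * M := by
  induction M with
  | zero => simp
  | succ M ih =>
    have hIco : Ico (-((M + 1 : ℕ) : ℤ)) 0 = insert (-(M : ℤ) - 1) (Ico (-(M : ℤ)) 0) := by
      ext k
      simp only [mem_Ico, mem_insert]
      omega
    rw [hIco, sum_insert (by simp), mul_add, ih]
    push_cast
    ring

lemma eta_rho_natCast_neg (j : ℤ) (m : ℕ) :
    eta (rho j m) (rho j (-m)) = (6 * j ^ 2 - 6 * j + 1) * ((m : ℂ) ^ 3 - m) / 6 := by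
  have hsum : ∀ k ∈ Ico (-(m : ℤ)) 0, etaSummand (rho j m) (rho j (-m)) k =
      -(((k : ℂ) + j * (m + 1)) * (k + (m + j * (1 - m)))) := by
    intro k hk
    rw [mem_Ico] at hk
    rw [etaSummand_rho, if_pos ⟨hk.2, by ring⟩, if_neg (by omega), if_pos (by omega)]
    push_cast
    ring
  have hsupp := support_etaSummand_rho_subset j m (-m)
  rw [abs_of_nonneg (by positivity)] at hsupp
  rw [eta, finsum_eq_sum_of_support_subset _ hsupp, sum_congr rfl hsum, sum_neg_distrib]
  linear_combination
    (-1 / 6 : ℂ) * six_mul_sum_Ico_add_mul_add ((j : ℂ) * (m + 1)) (m + j * (1 - m)) m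

lemma eta_rho (j m n : ℤ) :
    eta (rho j m) (rho j n) =
      if m + n = 0 then (6 * j ^ 2 - 6 * j + 1) * ((m : ℂ) ^ 3 - m) / 6 else 0 := by
  split_ifs with hmn
  · obtain rfl : n = -m := by omega
    obtain ⟨m, rfl | rfl⟩ := Int.eq_nat_or_neg m
    · exact eta_rho_natCast_neg j m
    · rw [eta_comm, neg_neg, eta_rho_natCast_neg]
      push_cast
      ring
  · exact eta_rho_of_add_ne_zero hmn

/-- Pullback of the Japanese cocycle along the intermediate-series representations:
for all integers `j, m, n`, the sums defining `η` on the operators `ρ_j(L_m)`, `ρ_j(L_n)`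
(and on `ρ_1(L_m)`, `ρ_1(L_n)`) are finitely supported, and
`η(ρ_j(L_m), ρ_j(L_n)) = (6j² − 6j + 1) · η(ρ_1(L_m), ρ_1(L_n))`. -/
theorem eta_rho_pullback (j m n : ℤ) :
    (Function.support (etaSummand (rho j m) (rho j n))).Finite ∧
    (Function.support (etaSummand (rho 1 m) (rho 1 n))).Finite ∧
    eta (rho j m) (rho j n) =
      ((6 * j ^ 2 - 6 * j + 1 : ℤ) : ℂ) * eta (rho 1 m) (rho 1 n) := by
  refine ⟨finite_support_etaSummand_rho j m n, finite_support_etaSummand_rho 1 m n, ?_⟩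
  rw [eta_rho, eta_rho]
  split_ifs
  · push_cast
    ring
  · rw [mul_zero]
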